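/- Let n ≥ 10 be a natural number, let A be the n×n tridiagonal matrix with A_{1,1} = A_{n,n} = 1, A_{i,i} = 2 for 1 < i < n, A_{i,i+1} = A_{i+1,i} = -1, and all other entries 0, let α = 1/n², and let B = (α I_n + A)^{-1}. Then for every 1 ≤ i ≤ n, we have 0.1·n ≤ B_{i,1} ≤ 20·n. -/

import Mathlib

open Matrix

/-- The `n × n` tridiagonal matrix with `A 1 1 = A n n = 1`, diagonal `2` otherwise,
off-diagonal entries `-1`, and all other entries `0` (0-indexed in Lean). -/
noncomputable def triA (n : ℕ) : Matrix (Fin n) (Fin n) ℝ :=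
  Matrix.of fun i j =>
    if i = j then (if (i : ℕ) = 0 ∨ (i : ℕ) = n - 1 then 1 else 2)
    else if (i : ℕ) + 1 = (j : ℕ) ∨ (j : ℕ) + 1 = (i : ℕ) then -1 else 0

/-- `B = (α I + A)⁻¹`. -/
noncomputable def Bmat (n : ℕ) (α : ℝ) : Matrix (Fin n) (Fin n) ℝ :=
  (α • (1 : Matrix (Fin n) (Fin n) ℝ) + triA n)⁻¹

/-!
Let `M = α I + A`. With the continuants `d₀ = 1`, `d₁ = 1 + α`, `d_{m+2} = (2 + α) d_{m+1} - d_m`,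
the vector `vᵢ = d_{n-i}` satisfies every row of `M v = 0` except the first, whose residual is
`D = α (d₀ + ⋯ + d_{n-1})`. Hence `B_{i,1} = d_{n-i} / D`.
For `α = 1/n²` the sequence `d` increases from `1` with ratio at most `1 + 2/n`, so
`1 ≤ d_m ≤ e²` for `m ≤ n` and `1/n ≤ D ≤ e²/n`, giving `n/e² ≤ B_{i,1} ≤ e² n`.
`M` is invertible because it is strictly diagonally dominant.
-/

open Finset

noncomputable def continuant (α : ℝ) : ℕ → ℝ
  | 0 => 1
  | 1 => 1 + α
  | m + 2 => (2 + α) * continuant α (m + 1) - continuant α m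

namespace continuant

variable (α : ℝ)

@[simp] lemma zero : continuant α 0 = 1 := rfl

@[simp] lemma one : continuant α 1 = 1 + α := rfl

lemma add_two (m : ℕ) :
    continuant α (m + 2) = (2 + α) * continuant α (m + 1) - continuant α m := rfl

lemma one_add_mul_succ_sub (m : ℕ) :
    (1 + α) * continuant α (m + 1) - continuant α m =
      α * ∑ k ∈ range (m + 2), continuant α k := by
  induction m with
  | zero =>
    rw [sum_range_succ, sum_range_one, one, zero]
    ring
  | succ m ih =>
    rw [sum_range_succ, mul_add, ← ih, add_two]
    ring

variable {α}

lemma one_le (hα : 0 ≤ α) (m : ℕ) : 1 ≤ continuant α m := by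
  suffices h : ∀ m, 1 ≤ continuant α m ∧ continuant α m ≤ continuant α (m + 1) from (h m).1
  intro m
  induction m with
  | zero => simpa using hα
  | succ m ih =>
    obtain ⟨h1, hle⟩ := ih
    refine ⟨h1.trans hle, ?_⟩
    rw [add_two]
    nlinarith

lemma succ_le_mul {u : ℝ} (hu : 0 ≤ u) (hu1 : u ≤ 1) (m : ℕ) :
    continuant (u ^ 2) (m + 1) ≤ (1 + 2 * u) * continuant (u ^ 2) m := by
  induction m with
  | zero =>
    rw [one, zero, mul_one]
    nlinarith
  | succ m ih =>
    have h1 := one_le (sq_nonneg u) m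
    rw [add_two]
    -- `(1 - u)² (1 + 2u) = 1 - u² (3 - 2u) ≤ 1`
    nlinarith [mul_le_mul_of_nonneg_left ih (sq_nonneg (1 - u)),
      mul_nonneg (mul_nonneg (sq_nonneg u) (by linarith : (0 : ℝ) ≤ 3 - 2 * u))
        (by linarith : (0 : ℝ) ≤ continuant (u ^ 2) m)]

lemma le_exp {u : ℝ} (hu : 0 ≤ u) (hu1 : u ≤ 1) (m : ℕ) :
    continuant (u ^ 2) m ≤ Real.exp (2 * u * m) := by
  induction m with
  | zero => simp
  | succ m ih =>
    calc continuant (u ^ 2) (m + 1) ≤ (1 + 2 * u) * continuant (u ^ 2) m := succ_le_mul hu hu1 m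
      _ ≤ Real.exp (2 * u) * Real.exp (2 * u * m) :=
        mul_le_mul (by linarith [Real.add_one_le_exp (2 * u)]) ih
          (by linarith [one_le (sq_nonneg u) m]) (Real.exp_pos _).le
      _ = Real.exp (2 * u * (m + 1 : ℕ)) := by
        rw [← Real.exp_add]
        congr 1
        push_cast
        ring

end continuant

lemma det_ne_zero_of_offDiag_nonpos_of_sum_row_pos {ι : Type*} [Fintype ι] [DecidableEq ι]
    (M : Matrix ι ι ℝ) (hoff : ∀ i j, i ≠ j → M i j ≤ 0) (hrow : ∀ i, 0 < ∑ j, M i j) :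
    M.det ≠ 0 := by
  refine det_ne_zero_of_sum_row_lt_diag fun k => ?_
  have hoff' : ∀ j ∈ univ.erase k, M k j ≤ 0 := fun j hj => hoff k j (ne_of_mem_erase hj).symm
  have hsplit := add_sum_erase univ (M k) (mem_univ k)
  have hdiag : 0 < M k k := by linarith [hrow k, sum_nonpos hoff']
  rw [sum_congr rfl fun j hj => Real.norm_of_nonpos (hoff' j hj), sum_neg_distrib,
    Real.norm_of_nonneg hdiag.le]
  linarith [hrow k]

noncomputable def shiftedTriA (n : ℕ) (α : ℝ) : Matrix (Fin n) (Fin n) ℝ := α • 1 + triA n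

lemma Bmat_eq (n : ℕ) (α : ℝ) : Bmat n α = (shiftedTriA n α)⁻¹ := rfl

lemma shiftedTriA_apply (n : ℕ) (α : ℝ) (i j : Fin n) :
    shiftedTriA n α i j =
      if (i : ℕ) = j then (if (i : ℕ) = 0 ∨ (i : ℕ) = n - 1 then 1 else 2) + α
      else if (i : ℕ) + 1 = j ∨ (j : ℕ) + 1 = i then -1 else 0 := by
  simp only [shiftedTriA, triA, Matrix.add_apply, Matrix.smul_apply, one_apply, of_apply,
    Fin.ext_iff, smul_eq_mul]
  split_ifs <;> ring

lemma shiftedTriA_mulVec_apply (n : ℕ) (α : ℝ) (x : ℕ → ℝ) (i : Fin n) :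
    (shiftedTriA n α *ᵥ fun j => x j) i =
      ((if (i : ℕ) = 0 ∨ (i : ℕ) = n - 1 then 1 else 2) + α) * x i
        - (if (i : ℕ) = 0 then 0 else x (i - 1)) - (if (i : ℕ) + 1 = n then 0 else x (i + 1)) := by
  obtain ⟨i, hi⟩ := i
  set g : ℕ → ℝ := fun j =>
    (if j = i then ((if i = 0 ∨ i = n - 1 then 1 else 2) + α) * x i else 0)
      - (if j = i - 1 then (if i = 0 then 0 else x (i - 1)) else 0)
      - (if j = i + 1 then (if i + 1 = n then 0 else x (i + 1)) else 0) with hg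
  have hsplit : ∀ j : Fin n, shiftedTriA n α ⟨i, hi⟩ j * x j = g j := by
    intro ⟨j, hj⟩
    rw [shiftedTriA_apply, hg]
    dsimp only
    split_ifs <;> subst_vars <;> first | ring1 | omega
  simp only [mulVec, dotProduct, hsplit]
  rw [Fin.sum_univ_eq_sum_range g]
  simp only [hg, sum_sub_distrib, sum_ite_eq', mem_range]
  split_ifs <;> first | ring1 | omega

lemma shiftedTriA_det_ne_zero (n : ℕ) {α : ℝ} (hα : 0 < α) : (shiftedTriA n α).det ≠ 0 := by
  refine det_ne_zero_of_offDiag_nonpos_of_sum_row_pos _ (fun i j hij => ?_) fun i => ?_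
  · rw [shiftedTriA_apply, if_neg (Fin.val_ne_of_ne hij)]
    split_ifs <;> norm_num
  · have h := shiftedTriA_mulVec_apply n α (fun _ => 1) i
    simp only [mulVec, dotProduct, mul_one] at h
    rw [h]
    split_ifs <;> first | linarith | omega

lemma shiftedTriA_mulVec_continuant_rev {n : ℕ} (hn : 2 ≤ n) (α : ℝ) :
    shiftedTriA n α *ᵥ (fun j => continuant α (n - 1 - j)) =
      Pi.single ⟨0, by omega⟩ (α * ∑ k ∈ range n, continuant α k) := by
  ext i
  rw [shiftedTriA_mulVec_apply n α (fun j => continuant α (n - 1 - j))]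
  obtain ⟨i, hi⟩ := i
  simp only [Pi.single_apply, Fin.ext_iff]
  rcases Nat.eq_zero_or_pos i with rfl | hi0
  · obtain ⟨m, rfl⟩ : ∃ m, n = m + 2 := ⟨n - 2, by omega⟩
    simp only [true_or, ↓reduceIte, show ¬0 + 1 = m + 2 by omega,
      show m + 2 - 1 - 0 = m + 1 by omega, show m + 2 - 1 - (0 + 1) = m by omega]
    simpa using continuant.one_add_mul_succ_sub α m
  · rcases eq_or_ne i (n - 1) with rfl | hin
    · simp only [or_true, ↓reduceIte, hi0.ne', show n - 1 + 1 = n by omega, Nat.sub_self,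
        show n - 1 - (n - 1 - 1) = 1 by omega]
      simp
    · obtain ⟨m, hm⟩ : ∃ m, n - 1 - (i + 1) = m := ⟨_, rfl⟩
      simp only [hi0.ne', hin, or_self, ↓reduceIte, show ¬i + 1 = n by omega, hm,
        show n - 1 - i = m + 1 by omega, show n - 1 - (i - 1) = m + 2 by omega,
        continuant.add_two]
      ring

lemma Bmat_apply_zero_mul {n : ℕ} (hn : 2 ≤ n) {α : ℝ} (hα : 0 < α) (i : Fin n) :
    Bmat n α i ⟨0, by omega⟩ * (α * ∑ k ∈ range n, continuant α k) =
      continuant α (n - 1 - i) := by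
  have h := congrArg (Bmat n α *ᵥ ·) (shiftedTriA_mulVec_continuant_rev hn α)
  rw [Bmat_eq, mulVec_mulVec, nonsing_inv_mul _ (shiftedTriA_det_ne_zero n hα).isUnit,
    one_mulVec] at h
  rw [Bmat_eq]
  simpa using (congrFun h i).symm

lemma continuant_inv_sq_mem_Icc {n k : ℕ} (hk : k ≤ n) :
    continuant ((n : ℝ)⁻¹ ^ 2) k ∈ Set.Icc 1 (Real.exp 2) := by
  have hu : (0 : ℝ) ≤ (n : ℝ)⁻¹ := by positivity
  refine ⟨continuant.one_le (by positivity) k,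
    (continuant.le_exp hu (Nat.cast_inv_le_one n) k).trans (Real.exp_le_exp.2 ?_)⟩
  rw [mul_assoc, inv_mul_eq_div]
  linarith [div_le_one_of_le₀ (Nat.cast_le.2 hk : (k : ℝ) ≤ n) (Nat.cast_nonneg n)]

lemma inv_sq_mul_sum_continuant_mem_Icc {n : ℕ} (hn : n ≠ 0) :
    (n : ℝ)⁻¹ ^ 2 * ∑ k ∈ range n, continuant ((n : ℝ)⁻¹ ^ 2) k ∈
      Set.Icc (n : ℝ)⁻¹ ((n : ℝ)⁻¹ * Real.exp 2) := by
  have hsum_ge : (n : ℝ) ≤ ∑ k ∈ range n, continuant ((n : ℝ)⁻¹ ^ 2) k := by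
    simpa using card_nsmul_le_sum (range n) _ 1
      fun k hk => (continuant_inv_sq_mem_Icc (mem_range.1 hk).le).1
  have hsum_le : ∑ k ∈ range n, continuant ((n : ℝ)⁻¹ ^ 2) k ≤ n * Real.exp 2 := by
    simpa using sum_le_card_nsmul (range n) _ (Real.exp 2)
      fun k hk => (continuant_inv_sq_mem_Icc (mem_range.1 hk).le).2
  have hscale : (n : ℝ)⁻¹ ^ 2 * n = (n : ℝ)⁻¹ := by
    have : (n : ℝ) ≠ 0 := Nat.cast_ne_zero.2 hn
    field_simp
  constructor
  · calc (n : ℝ)⁻¹ = (n : ℝ)⁻¹ ^ 2 * n := hscale.symm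
      _ ≤ _ := by gcongr
  · calc _ ≤ (n : ℝ)⁻¹ ^ 2 * (n * Real.exp 2) := by gcongr
      _ = _ := by rw [← mul_assoc, hscale]

lemma Bmat_inv_sq_apply_zero_mem_Icc {n : ℕ} (hn : 2 ≤ n) (i : Fin n) :
    Bmat n ((n : ℝ)⁻¹ ^ 2) i ⟨0, by omega⟩ ∈ Set.Icc (n / Real.exp 2) (Real.exp 2 * n) := by
  have hn0 : (0 : ℝ) < n := by positivity
  have hcol := Bmat_apply_zero_mul hn (α := (n : ℝ)⁻¹ ^ 2) (by positivity) i
  obtain ⟨hD1, hD2⟩ := inv_sq_mul_sum_continuant_mem_Icc (n := n) (by omega)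
  obtain ⟨hd1, hd2⟩ := continuant_inv_sq_mem_Icc (n := n) (k := n - 1 - i) (by omega)
  set D := (n : ℝ)⁻¹ ^ 2 * ∑ k ∈ range n, continuant ((n : ℝ)⁻¹ ^ 2) k
  have hD : 0 < D := lt_of_lt_of_le (by positivity) hD1
  rw [← mul_div_cancel_right₀ (Bmat n _ i _) hD.ne', hcol]
  constructor
  · rw [div_le_div_iff₀ (Real.exp_pos 2) hD]
    calc (n : ℝ) * D ≤ n * ((n : ℝ)⁻¹ * Real.exp 2) := by gcongr
      _ = Real.exp 2 := by field_simp
      _ ≤ _ := by nlinarith [Real.exp_pos 2]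
  · rw [div_le_iff₀ hD]
    calc _ ≤ Real.exp 2 := hd2
      _ = Real.exp 2 * n * (n : ℝ)⁻¹ := by field_simp
      _ ≤ _ := by gcongr

theorem stmt_0 (n : ℕ) (hn : 10 ≤ n) (i : Fin n) :
    (0.1 : ℝ) * n ≤ Bmat n (((n : ℝ) ^ 2)⁻¹) i ⟨0, by omega⟩ ∧
      Bmat n (((n : ℝ) ^ 2)⁻¹) i ⟨0, by omega⟩ ≤ 20 * n := by
  have hexp : Real.exp 2 < 9 := by
    rw [show (2 : ℝ) = 1 + 1 by norm_num, Real.exp_add]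
    nlinarith [Real.exp_one_lt_three, Real.exp_pos 1]
  obtain ⟨hlow, hupp⟩ := Bmat_inv_sq_apply_zero_mem_Icc (n := n) (by omega) i
  rw [← inv_pow]
  have hn0 : (0 : ℝ) < n := by positivity
  constructor
  · refine le_trans ?_ hlow
    rw [le_div_iff₀ (Real.exp_pos 2)]
    nlinarith
  · exact hupp.trans (by nlinarith)
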